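/- Every quadruple (A,B,a,b) ∈ SU(2)⁴ with tr(a) = tr(b) = 0, [A,B]ab = 1, and AB = BA is simultaneously conjugate to one of the form A = cos α + i σ_z sin α, B = cos β + i σ_z sin β, a = i σ_x cos γ + i σ_z sin γ, b = a⁻¹, with α ∈ [0,2π], β ∈ [0,π], γ ∈ [-π/2, π/2]. -/

import Mathlib

open Matrix

noncomputable section

def σx : Matrix (Fin 2) (Fin 2) ℂ := !![0, 1; 1, 0]
def σz : Matrix (Fin 2) (Fin 2) ℂ := !![1, 0; 0, -1]

abbrev SU2 := Matrix.specialUnitaryGroup (Fin 2) ℂ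

def circ (t : ℝ) : Matrix (Fin 2) (Fin 2) ℂ :=
  (Real.cos t : ℂ) • (1 : Matrix (Fin 2) (Fin 2) ℂ) + (Complex.I * (Real.sin t : ℂ)) • σz

/-! Write elements of SU(2) as `[[p, q], [-q̄, p̄]]` with `|p|² + |q|² = 1`; the diagonal ones
(`q = 0`) form the circle `SU2.torus`. Every element is conjugate into the torus, by a matrix
whose rows are eigenvectors. For commuting `A, B`, first diagonalise `A = diag(l, l̄)`: if
`l ≠ l̄` its centraliser is the torus, so `B` is diagonal too; otherwise `A = ±1` is central and
one diagonalises `B` instead. The Weyl element `[[0, 1], [-1, 0]]` inverts the torus, which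
moves the angle of `B` into `[0, π]`. Conjugating by `diag(w, w̄)` fixes the torus and multiplies
the off-diagonal entry of the traceless `a = [[i sin γ, q], [-q̄, -i sin γ]]` by `w²`, which turns
`q` into `i |q| = i cos γ`. Finally `[A, B] = 1` reduces the relation to `b = a⁻¹`. -/

open Complex ComplexConjugate

local notation "M₂" => Matrix (Fin 2) (Fin 2) ℂ

def quatMatrix (p q : ℂ) : M₂ := !![p, q; -conj q, conj p]

lemma quatMatrix_mul (p q p' q' : ℂ) :
    quatMatrix p q * quatMatrix p' q' =
      quatMatrix (p * p' - q * conj q') (p * q' + q * conj p') := by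
  ext i j; fin_cases i <;> fin_cases j <;> simp [quatMatrix] <;> ring

lemma star_quatMatrix (p q : ℂ) : star (quatMatrix p q) = quatMatrix (conj p) (-q) := by
  ext i j; fin_cases i <;> fin_cases j <;> simp [quatMatrix, Matrix.star_apply]

lemma quatMatrix_one_zero : quatMatrix 1 0 = 1 := by
  ext i j; fin_cases i <;> fin_cases j <;> simp [quatMatrix]

lemma quatMatrix_inj {p q p' q' : ℂ} (h : quatMatrix p q = quatMatrix p' q') :
    p = p' ∧ q = q' :=
  ⟨by simpa [quatMatrix] using congrFun₂ h 0 0, by simpa [quatMatrix] using congrFun₂ h 0 1⟩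

lemma det_quatMatrix (p q : ℂ) : (quatMatrix p q).det = normSq p + normSq q := by
  simp only [quatMatrix, Matrix.det_fin_two_of, ← mul_conj]
  ring

lemma quatMatrix_mem_specialUnitaryGroup {p q : ℂ} (h : normSq p + normSq q = 1) :
    quatMatrix p q ∈ Matrix.specialUnitaryGroup (Fin 2) ℂ := by
  have h' : p * conj p + q * conj q = 1 := by simp only [mul_conj]; exact_mod_cast h
  refine Matrix.mem_specialUnitaryGroup_iff.2 ⟨Matrix.mem_unitaryGroup_iff.2 ?_, ?_⟩
  · rw [star_quatMatrix, quatMatrix_mul, ← quatMatrix_one_zero]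
    congr 1 <;> simp only [map_neg, Complex.conj_conj]
    · linear_combination h'
    · ring
  · rw [det_quatMatrix]; exact_mod_cast h

lemma exists_eq_quatMatrix (U : SU2) :
    ∃ p q : ℂ, normSq p + normSq q = 1 ∧ (U : M₂) = quatMatrix p q := by
  obtain ⟨hU, hdet⟩ := Matrix.mem_specialUnitaryGroup_iff.1 U.2
  have hstar : star (U : M₂) = Matrix.adjugate U := by
    rw [← Matrix.inv_eq_right_inv (Matrix.mem_unitaryGroup_iff.1 hU), Matrix.inv_def, hdet]
    simp
  rw [Matrix.adjugate_fin_two] at hstar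
  have h11 : (U : M₂) 1 1 = conj ((U : M₂) 0 0) := by
    simpa [Matrix.star_apply] using (congrFun₂ hstar 0 0).symm
  have h10 : (U : M₂) 1 0 = -conj ((U : M₂) 0 1) := by
    simpa [Matrix.star_apply, eq_neg_iff_add_eq_zero, neg_eq_iff_eq_neg] using
      (congrFun₂ hstar 1 0).symm
  have hU_eq : (U : M₂) = quatMatrix ((U : M₂) 0 0) ((U : M₂) 0 1) := by
    rw [Matrix.eta_fin_two (U : M₂), h11, h10]; rfl
  refine ⟨_, _, ?_, hU_eq⟩
  rw [hU_eq, det_quatMatrix] at hdet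
  exact_mod_cast hdet

lemma Circle.exists_re_eq {x : ℝ} (hx : |x| ≤ 1) : ∃ z : Circle, (z : ℂ).re = x := by
  obtain ⟨h₁, h₂⟩ := abs_le.1 hx
  exact ⟨Circle.exp (Real.arccos x),
    by rw [Circle.coe_exp, exp_ofReal_mul_I_re, Real.cos_arccos h₁ h₂]⟩

lemma Circle.exists_sq_mul_eq (q : ℂ) : ∃ w : Circle, (w : ℂ) ^ 2 * q = I * ‖q‖ := by
  refine ⟨Circle.exp ((Real.pi / 2 - arg q) / 2), ?_⟩
  calc ((Circle.exp ((Real.pi / 2 - arg q) / 2) : ℂ)) ^ 2 * q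
      = (Complex.exp (↑((Real.pi / 2 - arg q) / 2) * I)) ^ 2 * (‖q‖ * Complex.exp (arg q * I)) := by
        rw [Circle.coe_exp, norm_mul_exp_arg_mul_I]
    _ = ‖q‖ * Complex.exp (2 * (↑((Real.pi / 2 - arg q) / 2) * I) + arg q * I) := by
        rw [Complex.exp_add, ← Complex.exp_nat_mul]; push_cast; ring
    _ = ‖q‖ * Complex.exp (Real.pi / 2 * I) := by congr 2; push_cast; ring
    _ = I * ‖q‖ := by rw [exp_pi_div_two_mul_I, mul_comm]

lemma Circle.surjOn_exp_Icc_zero_two_pi :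
    Set.SurjOn Circle.exp (Set.Icc 0 (2 * Real.pi)) Set.univ := by
  intro z _
  rcases le_or_gt 0 (arg z) with h | h
  · exact ⟨arg z, ⟨h, by linarith [arg_le_pi z, Real.pi_pos]⟩, Circle.exp_arg z⟩
  · exact ⟨arg z + 2 * Real.pi, ⟨by linarith [neg_pi_lt_arg z], by linarith⟩,
      by rw [Circle.exp_add_two_pi, Circle.exp_arg]⟩

lemma Circle.surjOn_exp_Icc_zero_pi :
    Set.SurjOn Circle.exp (Set.Icc 0 Real.pi) {z | 0 ≤ (z : ℂ).im} :=
  fun z hz => ⟨arg z, ⟨arg_nonneg_iff.2 hz, arg_le_pi z⟩, Circle.exp_arg z⟩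

namespace SU2

lemma coe_inv (g : SU2) : ((g⁻¹ : SU2) : M₂) = (g : M₂)⁻¹ :=
  (Matrix.inv_eq_left_inv (congrArg Subtype.val (inv_mul_cancel g))).symm

lemma coe_conj (g x : SU2) : ((g * x * g⁻¹ : SU2) : M₂) = (g : M₂) * x * (g : M₂)⁻¹ := by
  rw [← coe_inv]; rfl

lemma trace_conj (g x : SU2) :
    Matrix.trace ((g * x * g⁻¹ : SU2) : M₂) = Matrix.trace (x : M₂) := by
  rw [Submonoid.coe_mul, Submonoid.coe_mul, Matrix.trace_mul_cycle, ← Submonoid.coe_mul,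
    ← Submonoid.coe_mul, inv_mul_cancel, one_mul]

def torus : Circle →* SU2 where
  toFun z := ⟨quatMatrix z 0, quatMatrix_mem_specialUnitaryGroup (by simp)⟩
  map_one' := Subtype.ext (by simp [quatMatrix_one_zero])
  map_mul' z w := Subtype.ext (by simp [quatMatrix_mul])

lemma coe_torus (z : Circle) : (torus z : M₂) = quatMatrix z 0 := rfl

lemma exists_torus_eq_of_coe_eq {x : SU2} {p : ℂ} (hx : (x : M₂) = quatMatrix p 0) :
    ∃ z, torus z = x := by
  have h := (Matrix.mem_specialUnitaryGroup_iff.1 x.2).2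
  rw [hx, det_quatMatrix] at h
  have hp : normSq p = 1 := by exact_mod_cast (by simpa using h)
  have hp' : ‖p‖ = 1 := by rw [Complex.norm_def, hp, Real.sqrt_one]
  exact ⟨⟨p, mem_sphere_zero_iff_norm.2 hp'⟩, Subtype.ext hx.symm⟩

lemma torus_conj_torus (w z : Circle) : torus w * torus z * (torus w)⁻¹ = torus z := by
  rw [← map_mul, mul_comm, map_mul, mul_inv_cancel_right]

lemma conj_torus_of_conj_eq {z : Circle} (hz : conj (z : ℂ) = z) (g : SU2) :
    g * torus z * g⁻¹ = torus z := by
  have hscalar : (torus z : M₂) = (z : ℂ) • 1 := by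
    rw [coe_torus, quatMatrix, hz, Matrix.smul_one_eq_diagonal]
    ext i j; fin_cases i <;> fin_cases j <;> simp
  apply Subtype.ext
  rw [Submonoid.coe_mul, Submonoid.coe_mul, hscalar, Matrix.mul_smul, Matrix.mul_one,
    Matrix.smul_mul, ← Submonoid.coe_mul, mul_inv_cancel, Submonoid.coe_one]

lemma exists_torus_eq_of_commute {z : Circle} (hz : conj (z : ℂ) ≠ z) {x : SU2}
    (hx : Commute (torus z) x) : ∃ w, torus w = x := by
  obtain ⟨p, q, -, hpq⟩ := exists_eq_quatMatrix x
  have h := congrArg Subtype.val hx.eq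
  rw [Submonoid.coe_mul, Submonoid.coe_mul, hpq, coe_torus, quatMatrix_mul, quatMatrix_mul] at h
  have hq : q * ((z : ℂ) - conj (z : ℂ)) = 0 := by
    linear_combination (quatMatrix_inj h).2
  rw [mul_eq_zero, sub_eq_zero] at hq
  exact exists_torus_eq_of_coe_eq (hq.resolve_right (Ne.symm hz) ▸ hpq)

def weyl : SU2 := ⟨quatMatrix 0 1, quatMatrix_mem_specialUnitaryGroup (by simp)⟩

lemma weyl_conj_torus (z : Circle) : weyl * torus z * weyl⁻¹ = torus z⁻¹ := by
  apply Subtype.ext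
  show quatMatrix 0 1 * quatMatrix z 0 * star (quatMatrix 0 1) = quatMatrix ↑z⁻¹ 0
  rw [star_quatMatrix, quatMatrix_mul, quatMatrix_mul, Circle.coe_inv_eq_conj]
  congr 1 <;> simp

lemma exists_conj_eq_torus (U : SU2) : ∃ (g : SU2) (z : Circle), g * U * g⁻¹ = torus z := by
  obtain ⟨p, q, hpq, hU⟩ := exists_eq_quatMatrix U
  by_cases hq : q = 0
  · obtain ⟨z, hz⟩ := exists_torus_eq_of_coe_eq (hq ▸ hU)
    exact ⟨1, z, by rw [hz, one_mul, inv_one, mul_one]⟩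
  have hp : |p.re| ≤ 1 := by
    refine (abs_re_le_norm p).trans ?_
    nlinarith [normSq_eq_norm_sq p, normSq_nonneg q, norm_nonneg p]
  obtain ⟨l, hl⟩ := Circle.exists_re_eq hp
  have hl_re : (l : ℂ) + conj (l : ℂ) = p + conj p := by rw [add_conj, add_conj, hl]
  have hl_norm : (l : ℂ) * conj (l : ℂ) = 1 := by rw [mul_conj, Circle.normSq_coe, ofReal_one]
  have hpq' : p * conj p + q * conj q = 1 := by simp only [mul_conj]; exact_mod_cast hpq
  -- `Re l = Re p` makes `l` an eigenvalue of `U`, with left eigenvector `(q̄, p - l)`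
  set N : ℝ := √(normSq q + normSq (p - l))
  have hN2 : N * N = normSq q + normSq (p - l) :=
    Real.mul_self_sqrt (add_nonneg (normSq_nonneg _) (normSq_nonneg _))
  have hN : N ≠ 0 := by
    refine (Real.sqrt_pos.2 ?_).ne'
    linarith [normSq_pos.2 hq, normSq_nonneg (p - l)]
  have hNC : (N : ℂ) ≠ 0 := ofReal_ne_zero.2 hN
  have hrs : normSq (conj q / N) + normSq ((p - l) / N) = 1 := by
    rw [normSq_div, normSq_div, normSq_conj, normSq_ofReal, ← add_div, ← hN2,
      div_self (mul_self_ne_zero.2 hN)]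
  refine ⟨⟨quatMatrix (conj q / N) ((p - l) / N), quatMatrix_mem_specialUnitaryGroup hrs⟩, l,
    mul_inv_eq_of_eq_mul (Subtype.ext ?_)⟩
  show quatMatrix (conj q / N) ((p - l) / N) * U =
    quatMatrix l 0 * quatMatrix (conj q / N) ((p - l) / N)
  rw [hU, quatMatrix_mul, quatMatrix_mul]
  congr 1
  · ring
  · field_simp
    linear_combination hpq' - hl_norm + (l : ℂ) * hl_re

lemma exists_conj_eq_torus_of_commute {A B : SU2} (h : Commute A B) :
    ∃ (g : SU2) (l m : Circle), g * A * g⁻¹ = torus l ∧ g * B * g⁻¹ = torus m := by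
  obtain ⟨g, l, hl⟩ := exists_conj_eq_torus A
  by_cases hcentral : conj (l : ℂ) = l
  · obtain ⟨k, m, hm⟩ := exists_conj_eq_torus (g * B * g⁻¹)
    refine ⟨k * g, l, m, ?_, ?_⟩
    · rw [show k * g * A * (k * g)⁻¹ = k * (g * A * g⁻¹) * k⁻¹ by group, hl,
        conj_torus_of_conj_eq hcentral]
    · rw [← hm]; group
  · have hcomm : Commute (torus l) (g * B * g⁻¹) := by
      simpa only [MulAut.conj_apply, hl] using h.map (MulAut.conj g)
    obtain ⟨m, hm⟩ := exists_torus_eq_of_commute hcentral hcomm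
    exact ⟨g, l, m, hl, hm.symm⟩

lemma exists_conj_eq_torus_of_commute_of_im_nonneg {A B : SU2} (h : Commute A B) :
    ∃ (g : SU2) (l m : Circle), 0 ≤ (m : ℂ).im ∧
      g * A * g⁻¹ = torus l ∧ g * B * g⁻¹ = torus m := by
  obtain ⟨g, l, m, hl, hm⟩ := exists_conj_eq_torus_of_commute h
  rcases le_or_gt 0 (m : ℂ).im with him | him
  · exact ⟨g, l, m, him, hl, hm⟩
  refine ⟨weyl * g, l⁻¹, m⁻¹, ?_, ?_, ?_⟩
  · rw [Circle.coe_inv_eq_conj, conj_im]; linarith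
  · rw [← weyl_conj_torus, ← hl]; group
  · rw [← weyl_conj_torus, ← hm]; group

lemma coe_torus_conj (w : Circle) {x : SU2} {p q : ℂ} (hx : (x : M₂) = quatMatrix p q) :
    ((torus w * x * (torus w)⁻¹ : SU2) : M₂) = quatMatrix p ((w : ℂ) ^ 2 * q) := by
  have hw : (w : ℂ) * conj (w : ℂ) = 1 := by rw [mul_conj, Circle.normSq_coe, ofReal_one]
  show quatMatrix w 0 * x * star (quatMatrix w 0) = _
  rw [hx, star_quatMatrix, quatMatrix_mul, quatMatrix_mul]
  congr 1 <;> simp only [neg_zero, map_zero, Complex.conj_conj]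
  · linear_combination p * hw
  · ring

lemma exists_torus_conj_eq_of_trace_eq_zero {x : SU2} (hx : Matrix.trace (x : M₂) = 0) :
    ∃ (w : Circle) (γ : ℝ), γ ∈ Set.Icc (-(Real.pi / 2)) (Real.pi / 2) ∧
      ((torus w * x * (torus w)⁻¹ : SU2) : M₂) = quatMatrix (I * Real.sin γ) (I * Real.cos γ) := by
  obtain ⟨p, q, hpq, hxpq⟩ := exists_eq_quatMatrix x
  have hre : p.re = 0 := by
    rw [hxpq, quatMatrix, Matrix.trace_fin_two_of, add_conj] at hx
    simpa using hx
  have hq : normSq q = 1 - p.im ^ 2 := by rw [normSq_apply p, hre] at hpq; linarith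
  have him : -1 ≤ p.im ∧ p.im ≤ 1 :=
    abs_le_of_sq_le_sq' (by linarith [normSq_nonneg q]) zero_le_one
  obtain ⟨w, hw⟩ := Circle.exists_sq_mul_eq q
  refine ⟨w, Real.arcsin p.im, ⟨Real.neg_pi_div_two_le_arcsin _, Real.arcsin_le_pi_div_two _⟩, ?_⟩
  rw [coe_torus_conj w hxpq, hw, Real.cos_arcsin, ← hq, ← Complex.norm_def,
    Real.sin_arcsin him.1 him.2]
  congr 1
  apply Complex.ext <;> simp [hre]

end SU2

lemma circ_eq_torus_exp (t : ℝ) : circ t = (SU2.torus (Circle.exp t) : M₂) := by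
  rw [SU2.coe_torus, Circle.coe_exp, exp_mul_I, ← ofReal_cos, ← ofReal_sin]
  ext i j
  fin_cases i <;> fin_cases j <;> simp [circ, σz, quatMatrix, -ofReal_cos, -ofReal_sin] <;> ring

lemma smul_σx_add_smul_σz (c s : ℝ) :
    (I * (c : ℂ)) • σx + (I * (s : ℂ)) • σz = quatMatrix (I * s) (I * c) := by
  ext i j; fin_cases i <;> fin_cases j <;> simp [σx, σz, quatMatrix]

theorem abelian_quadruple_canonical_form_general (A B a b : SU2)
    (ha : Matrix.trace (a : Matrix (Fin 2) (Fin 2) ℂ) = 0)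
    (hrel : (A : Matrix (Fin 2) (Fin 2) ℂ) * B * (A : Matrix (Fin 2) (Fin 2) ℂ)⁻¹ *
      (B : Matrix (Fin 2) (Fin 2) ℂ)⁻¹ * a * b = 1)
    (hcomm : (A : Matrix (Fin 2) (Fin 2) ℂ) * B = (B : Matrix (Fin 2) (Fin 2) ℂ) * A) :
    ∃ (g : SU2) (α β γ : ℝ),
      α ∈ Set.Icc (0 : ℝ) (2 * Real.pi) ∧
      β ∈ Set.Icc (0 : ℝ) Real.pi ∧
      γ ∈ Set.Icc (-(Real.pi / 2)) (Real.pi / 2) ∧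
      (g : Matrix (Fin 2) (Fin 2) ℂ) * A * (g : Matrix (Fin 2) (Fin 2) ℂ)⁻¹ = circ α ∧
      (g : Matrix (Fin 2) (Fin 2) ℂ) * B * (g : Matrix (Fin 2) (Fin 2) ℂ)⁻¹ = circ β ∧
      (g : Matrix (Fin 2) (Fin 2) ℂ) * a * (g : Matrix (Fin 2) (Fin 2) ℂ)⁻¹ =
        (Complex.I * (Real.cos γ : ℂ)) • σx + (Complex.I * (Real.sin γ : ℂ)) • σz ∧
      (g : Matrix (Fin 2) (Fin 2) ℂ) * b * (g : Matrix (Fin 2) (Fin 2) ℂ)⁻¹ =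
        ((Complex.I * (Real.cos γ : ℂ)) • σx + (Complex.I * (Real.sin γ : ℂ)) • σz)⁻¹ := by
  have hAB : Commute A B := Subtype.ext hcomm
  have hb : b = a⁻¹ := by
    rw [← SU2.coe_inv, ← SU2.coe_inv] at hrel
    have h : A * B * A⁻¹ * B⁻¹ * a * b = 1 := Subtype.ext hrel
    rwa [hAB.eq, mul_inv_cancel_right, mul_inv_cancel, one_mul, mul_eq_one_iff_eq_inv'] at h
  obtain ⟨g, l, m, hm, hA, hB⟩ := SU2.exists_conj_eq_torus_of_commute_of_im_nonneg hAB
  obtain ⟨w, γ, hγ, ha'⟩ := SU2.exists_torus_conj_eq_of_trace_eq_zero (x := g * a * g⁻¹)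
    (by rwa [SU2.trace_conj])
  obtain ⟨α, hα, rfl⟩ := Circle.surjOn_exp_Icc_zero_two_pi (Set.mem_univ l)
  obtain ⟨β, hβ, rfl⟩ := Circle.surjOn_exp_Icc_zero_pi hm
  have hconj (x : SU2) : SU2.torus w * g * x * (SU2.torus w * g)⁻¹ =
      SU2.torus w * (g * x * g⁻¹) * (SU2.torus w)⁻¹ := by
    group
  refine ⟨SU2.torus w * g, α, β, γ, hα, hβ, hγ, ?_, ?_, ?_, ?_⟩ <;> rw [← SU2.coe_conj]
  · rw [hconj, hA, SU2.torus_conj_torus, circ_eq_torus_exp]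
  · rw [hconj, hB, SU2.torus_conj_torus, circ_eq_torus_exp]
  · rw [hconj, ha', smul_σx_add_smul_σz]
  · rw [hb, show ∀ h : SU2, h * a⁻¹ * h⁻¹ = (h * a * h⁻¹)⁻¹ from fun h => by group, SU2.coe_inv,
      hconj, ha', smul_σx_add_smul_σz]

/-- Every quadruple `(A,B,a,b) ∈ SU(2)⁴` with `tr a = tr b = 0`, `[A,B]ab = 1` and
`AB = BA` is simultaneously conjugate to a canonical quadruple. -/
theorem abelian_quadruple_canonical_form (A B a b : SU2)
    (ha : Matrix.trace (a : Matrix (Fin 2) (Fin 2) ℂ) = 0)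
    (hb : Matrix.trace (b : Matrix (Fin 2) (Fin 2) ℂ) = 0)
    (hrel : (A : Matrix (Fin 2) (Fin 2) ℂ) * B * (A : Matrix (Fin 2) (Fin 2) ℂ)⁻¹ *
      (B : Matrix (Fin 2) (Fin 2) ℂ)⁻¹ * a * b = 1)
    (hcomm : (A : Matrix (Fin 2) (Fin 2) ℂ) * B = (B : Matrix (Fin 2) (Fin 2) ℂ) * A) :
    ∃ (g : SU2) (α β γ : ℝ),
      α ∈ Set.Icc (0 : ℝ) (2 * Real.pi) ∧
      β ∈ Set.Icc (0 : ℝ) Real.pi ∧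
      γ ∈ Set.Icc (-(Real.pi / 2)) (Real.pi / 2) ∧
      (g : Matrix (Fin 2) (Fin 2) ℂ) * A * (g : Matrix (Fin 2) (Fin 2) ℂ)⁻¹ = circ α ∧
      (g : Matrix (Fin 2) (Fin 2) ℂ) * B * (g : Matrix (Fin 2) (Fin 2) ℂ)⁻¹ = circ β ∧
      (g : Matrix (Fin 2) (Fin 2) ℂ) * a * (g : Matrix (Fin 2) (Fin 2) ℂ)⁻¹ =
        (Complex.I * (Real.cos γ : ℂ)) • σx + (Complex.I * (Real.sin γ : ℂ)) • σz ∧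
      (g : Matrix (Fin 2) (Fin 2) ℂ) * b * (g : Matrix (Fin 2) (Fin 2) ℂ)⁻¹ =
        ((Complex.I * (Real.cos γ : ℂ)) • σx + (Complex.I * (Real.sin γ : ℂ)) • σz)⁻¹ :=
  abelian_quadruple_canonical_form_general A B a b ha hrel hcomm
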